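/- Let X be a topological space, E and F normed spaces, U ⊆ X × E a subset, and f : U → F a bounded continuous function. For x ∈ X set U_x := {y ∈ E : (x,y) ∈ U}, and assume there exists L ≥ 0 such that for every x ∈ X, the map f(x,·) : U_x → F is Lipschitz continuous with constant L. Let BC(X,E) denote the space of bounded continuous functions X → E with the supremum norm, and D := {γ ∈ BC(X,E) : graph(γ) ⊆ U}. Then for each γ ∈ D, the function f_*(γ) : X → F, x ↦ f(x, γ(x)), belongs to BC(X,F), and the superposition map f_* : D → BC(X,F) is Lipschitz continuous with constant L: ‖f_*(γ₂) − f_*(γ₁)‖_∞ ≤ L·‖γ₂ − γ₁‖_∞ for all γ₁, γ₂ ∈ D. -/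

import Mathlib

namespace BoundedContinuousFunction

variable {X E F : Type*} [TopologicalSpace X] [PseudoMetricSpace E]

def superposition [SeminormedAddCommGroup F] (f : X × E → F) {U : Set (X × E)}
    (hf : ContinuousOn f U) {C : ℝ} (hC : ∀ z ∈ U, ‖f z‖ ≤ C) (γ : X →ᵇ E)
    (hγ : ∀ x, (x, γ x) ∈ U) : X →ᵇ F :=
  ofNormedAddCommGroup (fun x => f (x, γ x))
    (hf.comp_continuous (continuous_id.prodMk γ.continuous) hγ) C fun x => hC _ (hγ x)

theorem dist_le_mul_dist_of_forall_dist_apply_le [PseudoMetricSpace F] {g₁ g₂ : X →ᵇ F}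
    {γ₁ γ₂ : X →ᵇ E} {L : ℝ} (hL : 0 ≤ L)
    (h : ∀ x, dist (g₁ x) (g₂ x) ≤ L * dist (γ₁ x) (γ₂ x)) :
    dist g₁ g₂ ≤ L * dist γ₁ γ₂ :=
  (dist_le (mul_nonneg hL dist_nonneg)).mpr fun x =>
    (h x).trans (mul_le_mul_of_nonneg_left (dist_coe_le_dist x) hL)

end BoundedContinuousFunction

theorem superposition_lipschitz
    {X E F : Type*} [TopologicalSpace X] [NormedAddCommGroup E] [NormedAddCommGroup F]
    (U : Set (X × E)) (f : X × E → F)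
    (hcont : ContinuousOn f U)
    (C : ℝ) (hbdd : ∀ z ∈ U, ‖f z‖ ≤ C)
    (L : ℝ) (hL : 0 ≤ L)
    (hlip : ∀ (x : X) (y₁ y₂ : E), (x, y₁) ∈ U → (x, y₂) ∈ U →
      ‖f (x, y₁) - f (x, y₂)‖ ≤ L * ‖y₁ - y₂‖) :
    (∀ γ : BoundedContinuousFunction X E, (∀ x, (x, γ x) ∈ U) →
        ∃ g : BoundedContinuousFunction X F, ∀ x, g x = f (x, γ x)) ∧
    ∀ (γ₁ γ₂ : BoundedContinuousFunction X E) (g₁ g₂ : BoundedContinuousFunction X F),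
      (∀ x, (x, γ₁ x) ∈ U) → (∀ x, (x, γ₂ x) ∈ U) →
      (∀ x, g₁ x = f (x, γ₁ x)) → (∀ x, g₂ x = f (x, γ₂ x)) →
      dist g₁ g₂ ≤ L * dist γ₁ γ₂ := by
  refine ⟨fun γ hγ =>
    ⟨BoundedContinuousFunction.superposition f hcont hbdd γ hγ, fun _ => rfl⟩, ?_⟩
  intro γ₁ γ₂ g₁ g₂ h₁ h₂ hg₁ hg₂
  refine BoundedContinuousFunction.dist_le_mul_dist_of_forall_dist_apply_le hL fun x => ?_
  simpa only [hg₁ x, hg₂ x, dist_eq_norm] using hlip x _ _ (h₁ x) (h₂ x)
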